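/- arXiv:2304.04699 — 7 statements merged into one kernel-verified Lean document; each statement's English description precedes it below -/
import Mathlib

section
/- For any ε ∈ (0,1), every finite graph G = (V,E) admits a partition of V into clusters V₁, ..., V_k such that the number of inter-cluster edges is at most ε|E|, and for each i either |V_i| = 1 or the induced subgraph G[V_i] has conductance at least ε/(4 log |V|). -/
/-!
Recursive sparse-cut decomposition. If a vertex set `t` is not a `φ`-expander in its induced
subgraph, cut it along `S | t \ S` with fewer than `φ · vol_t(S)` crossing edges, `S` being the
side of smaller induced volume, and recurse on both sides. Since the internal volume `a` of `S`
satisfies `2a ≤ vol(t)`, each of its units of volume loses one bit, `log₂ a ≤ log₂ vol(t) - 1`,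
and these bits pay for the cut: the number of separated ordered pairs is at most
`2φ · v · log₂ v`, `v = vol(t)`. For `φ = ε / (4 log₂ n)` and `v ≤ n²` this budget is at most
`ε v = ε · 2|E|`.
-/

open Finset

/-- Number of ordered adjacent pairs `(a, b)` with `a ∈ A`, `b ∈ B`.  For disjoint
`A`, `B` this equals `|E(A,B)|`. -/
def eB {V : Type*} [DecidableEq V] (G : SimpleGraph V) [DecidableRel G.Adj]
    (A B : Finset V) : ℕ :=
  ((A ×ˢ B).filter fun p => G.Adj p.1 p.2).card

namespace Finpartition

variable {α : Type*} [Lattice α] [OrderBot α] {a b : α}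

lemma disjoint_parts (P : Finpartition a) (Q : Finpartition b) (h : Disjoint a b) :
    Disjoint P.parts Q.parts :=
  disjoint_left.2 fun _ hP hQ => P.ne_bot hP (disjoint_self.1 (h.mono (P.le hP) (Q.le hQ)))

variable [IsModularLattice α] [DecidableEq α]

@[simps]
def union (P : Finpartition a) (Q : Finpartition b) (h : Disjoint a b) :
    Finpartition (a ⊔ b) where
  parts := P.parts ∪ Q.parts
  supIndep := P.supIndep.union Q.supIndep (by rwa [P.sup_parts, Q.sup_parts])
  sup_parts := by rw [sup_union, P.sup_parts, Q.sup_parts]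
  bot_notMem := by simp [P.bot_notMem, Q.bot_notMem]

end Finpartition

noncomputable def cutBudget (φ : ℝ) (v : ℕ) : ℝ := 2 * φ * v * Real.logb 2 v

lemma Real.logb_natCast_nonneg {b : ℝ} (hb : 1 ≤ b) (n : ℕ) : 0 ≤ Real.logb b n :=
  div_nonneg (Real.log_natCast_nonneg n) (Real.log_nonneg hb)

lemma Real.natCast_mul_logb_le {b x : ℝ} (hb : 1 < b) {n : ℕ} (h : (n : ℝ) ≤ x) :
    n * Real.logb b n ≤ n * Real.logb b x := by
  rcases Nat.eq_zero_or_pos n with rfl | hn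
  · simp
  · have hn' : (0 : ℝ) < n := by exact_mod_cast hn
    exact mul_le_mul_of_nonneg_left (Real.logb_le_logb_of_le hb hn' h) hn'.le

lemma cutBudget_nonneg {φ : ℝ} (hφ : 0 ≤ φ) (v : ℕ) : 0 ≤ cutBudget φ v := by
  have := Real.logb_natCast_nonneg one_le_two v
  unfold cutBudget
  positivity

lemma two_mul_add_cutBudget_le {φ : ℝ} (hφ : 0 ≤ φ) {a b c : ℕ} (hab : a ≤ b)
    (hc : (c : ℝ) < φ * (a + c)) :
    2 * c + cutBudget φ a + cutBudget φ b ≤ cutBudget φ (a + 2 * c + b) := by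
  have hac : (1 : ℝ) ≤ a + c := by
    have : 0 < a + c := Nat.pos_of_ne_zero fun h => by
      obtain ⟨rfl, rfl⟩ : a = 0 ∧ c = 0 := by omega
      simp at hc
    exact_mod_cast this
  have hab' : (a : ℝ) ≤ b := by exact_mod_cast hab
  unfold cutBudget
  set v : ℝ := ((a + 2 * c + b : ℕ) : ℝ) with hv
  push_cast at hv
  have hL : 1 ≤ Real.logb 2 v := by
    rw [Real.le_logb_iff_rpow_le one_lt_two (by linarith)]
    simpa using (by linarith : (2 : ℝ) ≤ v)
  have ha : (a : ℝ) * Real.logb 2 a ≤ a * (Real.logb 2 v - 1) := by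
    have := Real.natCast_mul_logb_le one_lt_two (n := a) (x := v / 2) (by linarith)
    rwa [Real.logb_div (by linarith) two_ne_zero, Real.logb_self_eq_one one_lt_two] at this
  have hb : (b : ℝ) * Real.logb 2 b ≤ b * Real.logb 2 v :=
    Real.natCast_mul_logb_le one_lt_two (by linarith)
  have hpay : 2 * (c : ℝ) ≤ 2 * φ * a + 4 * φ * c * Real.logb 2 v := by
    nlinarith [mul_nonneg (mul_nonneg hφ (Nat.cast_nonneg c)) (by linarith : 0 ≤ Real.logb 2 v - 1)]
  generalize Real.logb 2 v = L at *
  rw [hv]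
  linarith [mul_le_mul_of_nonneg_left ha (by positivity : 0 ≤ 2 * φ),
    mul_le_mul_of_nonneg_left hb (by positivity : 0 ≤ 2 * φ)]

lemma cutBudget_le_of_le_sq {ε : ℝ} (hε : 0 ≤ ε) {v n : ℕ} (hv : v ≤ n ^ 2) :
    cutBudget (ε / (4 * Real.logb 2 n)) v ≤ ε * v := by
  rcases Nat.eq_zero_or_pos v with rfl | hv0
  · simp [cutBudget]
  have hlog : Real.logb 2 v ≤ 2 * Real.logb 2 n := by
    rw [show 2 * Real.logb 2 n = Real.logb 2 ((n : ℝ) ^ 2) by simp [Real.logb_pow]]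
    exact Real.logb_le_logb_of_le one_lt_two (by exact_mod_cast hv0) (by exact_mod_cast hv)
  have hL := Real.logb_natCast_nonneg one_le_two n
  have hφ : 0 ≤ ε / (4 * Real.logb 2 n) := by positivity
  -- `φ · 4 log₂ n` is `ε`, or `0` when `n ≤ 1` because division by zero gives zero
  have hφL : ε / (4 * Real.logb 2 n) * (4 * Real.logb 2 n) ≤ ε := by
    rcases eq_or_ne (Real.logb 2 n) 0 with h | h
    · simp [h, hε]
    · rw [div_mul_cancel₀ _ (by positivity)]
  calc cutBudget (ε / (4 * Real.logb 2 n)) v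
      ≤ 2 * (ε / (4 * Real.logb 2 n)) * v * (2 * Real.logb 2 n) := by
        unfold cutBudget; gcongr
    _ = ε / (4 * Real.logb 2 n) * (4 * Real.logb 2 n) * v := by ring
    _ ≤ ε * v := by gcongr

section

variable {V : Type*} [DecidableEq V] (G : SimpleGraph V) [DecidableRel G.Adj]

lemma eB_comm (A B : Finset V) : eB G A B = eB G B A := by
  refine card_bij' (fun p _ => p.swap) (fun p _ => p.swap) ?_ ?_ (fun _ _ => rfl) (fun _ _ => rfl)
  all_goals
    intro p hp
    simp only [mem_filter, mem_product] at hp ⊢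
    exact ⟨hp.1.symm, hp.2.symm⟩

lemma eB_union_left {A B : Finset V} (C : Finset V) (h : Disjoint A B) :
    eB G (A ∪ B) C = eB G A C + eB G B C := by
  rw [eB, union_product, filter_union, card_union_of_disjoint]
  · rfl
  exact disjoint_filter_filter (disjoint_product.2 (Or.inl h))

lemma eB_union_right (A : Finset V) {B C : Finset V} (h : Disjoint B C) :
    eB G A (B ∪ C) = eB G A B + eB G A C := by
  rw [eB_comm, eB_comm G A B, eB_comm G A C, eB_union_left G A h]

lemma eB_sdiff_left {S t : Finset V} (hSt : S ⊆ t) (C : Finset V) :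
    eB G t C = eB G S C + eB G (t \ S) C := by
  rw [← eB_union_left G C disjoint_sdiff, union_sdiff_of_subset hSt]

lemma eB_sdiff_right (A : Finset V) {S t : Finset V} (hSt : S ⊆ t) :
    eB G A t = eB G A S + eB G A (t \ S) := by
  rw [← eB_union_right G A disjoint_sdiff, union_sdiff_of_subset hSt]

lemma sum_eB_singleton (S t : Finset V) : ∑ v ∈ S, eB G {v} t = eB G S t := by
  induction S using Finset.induction_on with
  | empty => simp [eB]
  | insert a S ha ih =>
    rw [sum_insert ha, insert_eq, eB_union_left G t (disjoint_singleton_left.2 ha), ih]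

lemma eB_le_card_mul_card (A B : Finset V) : eB G A B ≤ #A * #B :=
  (card_filter_le _ _).trans_eq (card_product A B)

lemma eB_univ_univ [Fintype V] : eB G univ univ = 2 * #G.edgeFinset := by
  rw [← G.sum_degrees_eq_twice_card_edges, ← sum_eB_singleton]
  refine sum_congr rfl fun x _ => ?_
  rw [eB, singleton_product, filter_map, card_map, SimpleGraph.degree,
    SimpleGraph.neighborFinset_eq_filter]
  rfl

def cutCard {t : Finset V} (P : Finpartition t) : ℕ :=
  #((t ×ˢ t).filter fun p : V × V => G.Adj p.1 p.2 ∧ ∀ s ∈ P.parts, ¬ (p.1 ∈ s ∧ p.2 ∈ s))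

lemma cutCard_add_sum_eB_parts {t : Finset V} (P : Finpartition t) :
    cutCard G P + ∑ s ∈ P.parts, eB G s s = eB G t t := by
  classical
  have hinside : ((t ×ˢ t).filter fun p : V × V => G.Adj p.1 p.2 ∧ ∃ s ∈ P.parts, p.1 ∈ s ∧ p.2 ∈ s)
      = P.parts.biUnion fun s => (s ×ˢ s).filter fun p => G.Adj p.1 p.2 := by
    ext p
    simp only [mem_filter, mem_product, mem_biUnion]
    constructor
    · rintro ⟨-, hadj, s, hs, hp⟩
      exact ⟨s, hs, hp, hadj⟩
    · rintro ⟨s, hs, hp, hadj⟩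
      exact ⟨⟨P.subset hs hp.1, P.subset hs hp.2⟩, hadj, s, hs, hp⟩
  have hdisj : (P.parts : Set (Finset V)).PairwiseDisjoint
      fun s => (s ×ˢ s).filter fun p : V × V => G.Adj p.1 p.2 :=
    fun s hs u hu hsu => disjoint_filter_filter (disjoint_product.2 (Or.inl (P.disjoint hs hu hsu)))
  rw [eB, ← card_filter_add_card_filter_not (fun p : V × V => ∃ s ∈ P.parts, p.1 ∈ s ∧ p.2 ∈ s),
    filter_filter, filter_filter, hinside, card_biUnion hdisj, add_comm]
  simp only [not_exists, not_and, cutCard, eB]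

lemma cutCard_top (t : Finset V) : cutCard G (⊤ : Finpartition t) = 0 := by
  rw [cutCard, card_eq_zero, filter_eq_empty_iff]
  rintro ⟨x, y⟩ hp ⟨-, hsep⟩
  rw [mem_product] at hp
  have ht : t ≠ ∅ := ne_empty_of_mem hp.1
  exact hsep t (by simp [Top.top, ht]) hp

def IsExpander (φ : ℝ) (s : Finset V) : Prop :=
  ∀ S ⊆ s, S.Nonempty → S ≠ s →
    φ * min (eB G S s : ℝ) (eB G (s \ S) s : ℝ) ≤ (eB G S (s \ S) : ℝ)

lemma exists_sparse_cut_of_not_isExpander {φ : ℝ} (hφ : 0 ≤ φ) {t : Finset V}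
    (h : ¬ IsExpander G φ t) :
    ∃ S ⊂ t, S.Nonempty ∧ eB G S t ≤ eB G (t \ S) t ∧
      (eB G S (t \ S) : ℝ) < φ * eB G S t := by
  simp only [IsExpander, not_forall, not_le] at h
  obtain ⟨S, hSt, hS, hSne, hcut⟩ := h
  have hSst : S ⊂ t := hSt.ssubset_of_ne hSne
  rcases le_total (eB G S t) (eB G (t \ S) t) with hvol | hvol
  · refine ⟨S, hSst, hS, hvol, hcut.trans_le ?_⟩
    gcongr
    exact min_le_left _ _
  · refine ⟨t \ S, sdiff_ssubset hSt hS, sdiff_nonempty.2 (not_subset_of_ssubset hSst), ?_, ?_⟩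
    · rwa [Finset.sdiff_sdiff_eq_self hSt]
    · rw [Finset.sdiff_sdiff_eq_self hSt, eB_comm]
      refine hcut.trans_le ?_
      gcongr
      exact min_le_right _ _

lemma eB_self_eq_of_subset {S t : Finset V} (hSt : S ⊆ t) :
    eB G t t = eB G S S + 2 * eB G S (t \ S) + eB G (t \ S) (t \ S) := by
  rw [eB_sdiff_left G hSt, eB_sdiff_right G S hSt, eB_sdiff_right G (t \ S) hSt,
    eB_comm G (t \ S) S]
  ring

lemma cutCard_union_sdiff {S t : Finset V} (hSt : S ⊆ t) (P₁ : Finpartition S)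
    (P₂ : Finpartition (t \ S)) :
    cutCard G ((P₁.union P₂ disjoint_sdiff).copy (union_sdiff_of_subset hSt)) =
      cutCard G P₁ + cutCard G P₂ + 2 * eB G S (t \ S) := by
  have h := cutCard_add_sum_eB_parts G ((P₁.union P₂ disjoint_sdiff).copy (union_sdiff_of_subset hSt))
  have h₁ := cutCard_add_sum_eB_parts G P₁
  have h₂ := cutCard_add_sum_eB_parts G P₂
  rw [Finpartition.copy_parts, Finpartition.union_parts,
    sum_union (P₁.disjoint_parts P₂ disjoint_sdiff)] at h
  have := eB_self_eq_of_subset G hSt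
  omega

lemma exists_expander_partition {φ : ℝ} (hφ : 0 ≤ φ) (t : Finset V) :
    ∃ P : Finpartition t, (cutCard G P : ℝ) ≤ cutBudget φ (eB G t t) ∧
      ∀ s ∈ P.parts, IsExpander G φ s := by
  induction t using Finset.strongInduction with
  | _ t ih =>
  by_cases ht : IsExpander G φ t
  · refine ⟨⊤, by simpa [cutCard_top] using cutBudget_nonneg hφ _, fun s hs => ?_⟩
    rwa [mem_singleton.1 (Finpartition.parts_top_subset t hs)]
  obtain ⟨S, hSt, hS, hvol, hcut⟩ := exists_sparse_cut_of_not_isExpander G hφ ht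
  obtain ⟨P₁, hcut₁, hP₁⟩ := ih S hSt
  obtain ⟨P₂, hcut₂, hP₂⟩ := ih (t \ S) (sdiff_ssubset hSt.subset hS)
  refine ⟨(P₁.union P₂ disjoint_sdiff).copy (union_sdiff_of_subset hSt.subset), ?_, ?_⟩
  · have hab : eB G S S ≤ eB G (t \ S) (t \ S) := by
      rw [eB_sdiff_right G S hSt.subset, eB_sdiff_right G (t \ S) hSt.subset,
        eB_comm G (t \ S) S] at hvol
      omega
    have hc : (eB G S (t \ S) : ℝ) < φ * (eB G S S + eB G S (t \ S)) := by
      rwa [eB_sdiff_right G S hSt.subset, Nat.cast_add] at hcut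
    rw [cutCard_union_sdiff G hSt.subset, eB_self_eq_of_subset G hSt.subset]
    push_cast
    linarith [two_mul_add_cutBudget_le hφ hab hc]
  · intro s hs
    rcases mem_union.1 hs with hs | hs
    exacts [hP₁ s hs, hP₂ s hs]

end

theorem stmt1_general {V : Type*} [Fintype V] [DecidableEq V]
    (G : SimpleGraph V) [DecidableRel G.Adj]
    (ε : ℝ) (hε0 : 0 < ε) :
    ∃ P : Finpartition (Finset.univ : Finset V),
      ((((Finset.univ ×ˢ Finset.univ).filter fun p : V × V =>
            G.Adj p.1 p.2 ∧ ∀ t ∈ P.parts, ¬ (p.1 ∈ t ∧ p.2 ∈ t)).card : ℝ)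
          ≤ ε * (2 * G.edgeFinset.card)) ∧
      ∀ t ∈ P.parts, t.card = 1 ∨
        ∀ S ⊆ t, S.Nonempty → S ≠ t →
          ε / (4 * Real.logb 2 (Fintype.card V)) *
              min (∑ v ∈ S, (eB G {v} t : ℝ)) (∑ v ∈ t \ S, (eB G {v} t : ℝ))
            ≤ (eB G S (t \ S) : ℝ) := by
  have hφ : 0 ≤ ε / (4 * Real.logb 2 (Fintype.card V)) := by
    have := Real.logb_natCast_nonneg one_le_two (Fintype.card V)
    positivity
  obtain ⟨P, hcut, hexp⟩ := exists_expander_partition G hφ univ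
  refine ⟨P, ?_, fun t ht => Or.inr fun S hS hSne hSt => ?_⟩
  · have hvol : eB G univ univ ≤ Fintype.card V ^ 2 :=
      (eB_le_card_mul_card G _ _).trans_eq (by rw [card_univ, sq])
    -- `congr` matches the `Fintype`-based decidability instance of the statement's filter
    calc _ = (cutCard G P : ℝ) := by unfold cutCard; congr
      _ ≤ ε * eB G univ univ := hcut.trans (cutBudget_le_of_le_sq hε0.le hvol)
      _ = _ := by rw [eB_univ_univ, Nat.cast_mul, Nat.cast_two]
  · simp only [← Nat.cast_sum, sum_eB_singleton]
    exact hexp t ht S hS hSne hSt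

/-- For any `ε ∈ (0,1)`, every finite graph `G = (V,E)` admits a partition of `V`
into clusters such that the number of inter-cluster edges is at most `ε|E|`
(expressed here with ordered pairs: at most `ε · 2|E|` ordered adjacent pairs lie in
different clusters), and every cluster `t` is either a singleton or induces a
subgraph of conductance at least `ε / (4 log₂ |V|)`: for every nonempty proper
`S ⊆ t`, the number of induced edges leaving `S` is at least
`ε / (4 log₂ |V|)` times the smaller of the induced volumes of `S` and `t \ S`
(degrees measured in the induced subgraph `G[t]`). -/
theorem stmt1 {V : Type*} [Fintype V] [DecidableEq V]
    (G : SimpleGraph V) [DecidableRel G.Adj]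
    (ε : ℝ) (hε0 : 0 < ε) (hε1 : ε < 1) :
    ∃ P : Finpartition (Finset.univ : Finset V),
      ((((Finset.univ ×ˢ Finset.univ).filter fun p : V × V =>
            G.Adj p.1 p.2 ∧ ∀ t ∈ P.parts, ¬ (p.1 ∈ t ∧ p.2 ∈ t)).card : ℝ)
          ≤ ε * (2 * G.edgeFinset.card)) ∧
      ∀ t ∈ P.parts, t.card = 1 ∨
        ∀ S ⊆ t, S.Nonempty → S ≠ t →
          ε / (4 * Real.logb 2 (Fintype.card V)) *
              min (∑ v ∈ S, (eB G {v} t : ℝ)) (∑ v ∈ t \ S, (eB G {v} t : ℝ))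
            ≤ (eB G S (t \ S) : ℝ) :=
  stmt1_general G ε hε0
end

section
/- Let G = (V,E) be a graph with arboricity at most α in which each edge e has a positive weight w(e). Suppose each vertex u picks an incident edge of maximum weight among its incident edges. Then the total weight of the set of picked edges is at least w(E)/(2α). -/
/-!
Split `E` into the `α` forests. In a finite forest every edge can be assigned one of its
endpoints injectively (peel off a leaf together with its edge), and the edge picked by that
endpoint weighs at least as much as the edge; so every forest weighs at most `∑ᵥ w (pick v)`,
and `w(E) ≤ α ∑ᵥ w (pick v)`. Since an edge is picked only by its two endpoints,
`∑ᵥ w (pick v)` is at most twice the weight of the set of picked edges.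
-/

open Finset

namespace SimpleGraph
variable {V : Type*} {G : SimpleGraph V}

lemma IsAcyclic.exists_existsUnique_adj [Finite V] (hG : G.IsAcyclic) (hne : G.edgeSet.Nonempty) :
    ∃ v, ∃! u, G.Adj v u := by
  obtain ⟨e, he⟩ := hne
  induction e using Sym2.ind with | _ a b => ?_
  have hab : G.Adj a b := he
  have : Nonempty V := ⟨a⟩
  obtain ⟨u, v, p, hp, hmax⟩ := Walk.exists_isPath_forall_isPath_length_le_length G
  have hnil : ¬p.Nil := by
    have := hmax a b (.cons hab .nil) (by simp [hab.ne])
    rw [← Walk.length_eq_zero_iff]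
    simp only [Walk.length_cons, Walk.length_nil] at this
    omega
  refine ⟨u, p.snd, p.adj_snd hnil, fun w hadj => hG.eq_snd_of_adj_start hp hadj ?_⟩
  -- a longest path cannot be extended at its start
  by_contra hw
  have := hmax w v (.cons hadj.symm p) (hp.cons hw)
  simp at this

lemma IsAcyclic.exists_injOn_mem_edgeSet [Finite V] (hG : G.IsAcyclic) :
    ∃ f : Sym2 V → V, (∀ e ∈ G.edgeSet, f e ∈ e) ∧ G.edgeSet.InjOn f := by
  induction h : G.edgeSet.ncard using Nat.strong_induction_on generalizing G with
  | _ n ih =>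
  rcases G.edgeSet.eq_empty_or_nonempty with hempty | hne
  · exact ⟨fun e => e.out.1, by simp [hempty], by simp [hempty]⟩
  obtain ⟨v, u, hvu, hleaf⟩ := hG.exists_existsUnique_adj hne
  have hlt : (G.deleteEdges {s(v, u)}).edgeSet.ncard < n := by
    rw [edgeSet_deleteEdges, ← h]
    exact Set.ncard_sdiff_singleton_lt_of_mem hvu (Set.toFinite _)
  obtain ⟨f, hf, hinj⟩ := ih _ hlt (hG.anti (deleteEdges_le _)) rfl
  have hv : ∀ e ∈ (G.deleteEdges {s(v, u)}).edgeSet, v ∉ e := by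
    intro e he hve
    rw [edgeSet_deleteEdges] at he
    obtain ⟨x, rfl⟩ := Sym2.mem_iff_exists.mp hve
    exact he.2 (by rw [hleaf x he.1]; rfl)
  classical
  have hedge : G.edgeSet = insert s(v, u) (G.deleteEdges {s(v, u)}).edgeSet := by
    rw [edgeSet_deleteEdges, Set.insert_sdiff_singleton,
      Set.insert_eq_of_mem (G.mem_edgeSet.2 hvu)]
  refine ⟨fun e => if v ∈ e then v else f e, ?_, ?_⟩
  · rw [hedge]
    rintro e (rfl | he)
    · simp
    · simpa [hv e he] using hf e he
  · rw [hedge, Set.injOn_insert (fun h => (hv _ h) (Sym2.mem_mk_left v u))]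
    refine ⟨hinj.congr fun e he => (if_neg (hv e he)).symm, ?_⟩
    rintro ⟨e, he, hfe⟩
    simp only [hv e he, if_false, Sym2.mem_mk_left, if_true] at hfe
    exact hv e he (hfe ▸ hf e he)

variable [Fintype V] [DecidableEq V] (G) [DecidableRel G.Adj]

lemma sum_edgeFinset_filter_le_sum_pick_of_isAcyclic {w : Sym2 V → ℝ}
    (hw : ∀ e ∈ G.edgeFinset, 0 ≤ w e)
    {pick : V → Sym2 V} (hpick : ∀ v, 0 < G.degree v →
      pick v ∈ G.incidenceFinset v ∧ ∀ e ∈ G.incidenceFinset v, w e ≤ w (pick v))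
    {H : SimpleGraph V} [DecidablePred (· ∈ H.edgeSet)] (hH : H.IsAcyclic) :
    ∑ e ∈ G.edgeFinset with e ∈ H.edgeSet, w e ≤
      ∑ v ∈ univ.filter fun v => 0 < G.degree v, w (pick v) := by
  obtain ⟨f, hf, hinj⟩ := hH.exists_injOn_mem_edgeSet
  have hinc : ∀ e ∈ G.edgeFinset.filter (· ∈ H.edgeSet), e ∈ G.incidenceFinset (f e) := by
    intro e he
    rw [mem_filter, mem_edgeFinset] at he
    exact (mem_incidenceFinset _ _ _).2 ⟨he.1, hf e he.2⟩
  have hdeg : ∀ e ∈ G.edgeFinset.filter (· ∈ H.edgeSet), 0 < G.degree (f e) := fun e he =>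
    card_incidenceFinset_eq_degree G (f e) ▸ card_pos.2 ⟨e, hinc e he⟩
  calc ∑ e ∈ G.edgeFinset with e ∈ H.edgeSet, w e
      ≤ ∑ e ∈ G.edgeFinset with e ∈ H.edgeSet, w (pick (f e)) :=
        sum_le_sum fun e he => (hpick _ (hdeg e he)).2 e (hinc e he)
    _ = ∑ v ∈ (G.edgeFinset.filter (· ∈ H.edgeSet)).image f, w (pick v) := by
        rw [sum_image fun e he e' he' => hinj (mem_filter.1 he).2 (mem_filter.1 he').2]
    _ ≤ ∑ v ∈ univ.filter fun v => 0 < G.degree v, w (pick v) := by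
        refine sum_le_sum_of_subset_of_nonneg
          (image_subset_iff.2 fun e he => mem_filter.2 ⟨mem_univ _, hdeg e he⟩) fun v hv _ => ?_
        exact hw _ (G.incidenceFinset_subset v (hpick v (mem_filter.1 hv).2).1)

end SimpleGraph

lemma Finset.sum_comp_le_two_mul_sum_image {α : Type*} [DecidableEq α] (s : Finset α)
    {p : α → Sym2 α} (hp : ∀ a ∈ s, a ∈ p a) {g : Sym2 α → ℝ} (hg : ∀ a ∈ s, 0 ≤ g (p a)) :
    ∑ a ∈ s, g (p a) ≤ 2 * ∑ e ∈ s.image p, g e := by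
  rw [sum_comp, mul_sum]
  refine sum_le_sum fun e he => ?_
  obtain ⟨a, ha, rfl⟩ := mem_image.1 he
  have hfiber : #{b ∈ s | p b = p a} ≤ 2 :=
    calc #{b ∈ s | p b = p a} ≤ #(p a).toFinset := card_le_card fun b hb =>
          Sym2.mem_toFinset.2 ((mem_filter.1 hb).2 ▸ hp b (mem_filter.1 hb).1)
      _ ≤ 2 := by rw [Sym2.card_toFinset]; split_ifs <;> norm_num
  rw [nsmul_eq_mul]
  exact mul_le_mul_of_nonneg_right (by exact_mod_cast hfiber) (hg a ha)

lemma Finset.sum_eq_sum_sum_filter_of_existsUnique {ι α M : Type*} [Fintype ι]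
    [AddCommMonoid M] {s : Finset α} {P : ι → α → Prop} [∀ i, DecidablePred (P i)]
    (h : ∀ a ∈ s, ∃! i, P i a) (f : α → M) : ∑ a ∈ s, f a = ∑ i, ∑ a ∈ s with P i a, f a := by
  simp_rw [sum_filter]
  rw [sum_comm]
  refine sum_congr rfl fun a ha => ?_
  obtain ⟨i, hi, huniq⟩ := h a ha
  rw [sum_eq_single i (fun j _ hj => if_neg fun hPj => hj (huniq j hPj)) (by simp), if_pos hi]

theorem stmt5_general {V : Type*} [Fintype V] [DecidableEq V]
    (G : SimpleGraph V) [DecidableRel G.Adj]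
    (α : ℕ)
    (F : Fin α → SimpleGraph V)
    (hforest : ∀ i, (F i).IsAcyclic)
    (hpart : ∀ e ∈ G.edgeSet, ∃! i, e ∈ (F i).edgeSet)
    (w : Sym2 V → ℝ)
    (hw : ∀ e ∈ G.edgeFinset, 0 < w e)
    (pick : V → Sym2 V)
    (hpick : ∀ v, 0 < G.degree v →
      pick v ∈ G.incidenceFinset v ∧ ∀ e ∈ G.incidenceFinset v, w e ≤ w (pick v)) :
    (∑ e ∈ G.edgeFinset, w e) / (2 * α) ≤
      ∑ e ∈ (Finset.univ.filter fun v => 0 < G.degree v).image pick, w e := by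
  classical
  set A := univ.filter fun v => 0 < G.degree v
  have hpickA : ∀ v ∈ A, pick v ∈ G.edgeFinset ∧ v ∈ pick v := fun v hv =>
    have hinc := (hpick v (mem_filter.1 hv).2).1
    ⟨G.incidenceFinset_subset v hinc, ((G.mem_incidenceFinset _ _).1 hinc).2⟩
  have hw' : ∀ e ∈ G.edgeFinset, 0 ≤ w e := fun e he => (hw e he).le
  have hforests : ∑ e ∈ G.edgeFinset, w e ≤ α * ∑ v ∈ A, w (pick v) := by
    rw [sum_eq_sum_sum_filter_of_existsUnique fun e he => hpart e (G.mem_edgeFinset.1 he)]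
    calc ∑ i, ∑ e ∈ G.edgeFinset with e ∈ (F i).edgeSet, w e
        ≤ ∑ _i : Fin α, ∑ v ∈ A, w (pick v) :=
          sum_le_sum fun i _ =>
            G.sum_edgeFinset_filter_le_sum_pick_of_isAcyclic hw' hpick (hforest i)
      _ = α * ∑ v ∈ A, w (pick v) := by simp
  have hpicked : ∑ v ∈ A, w (pick v) ≤ 2 * ∑ e ∈ A.image pick, w e :=
    sum_comp_le_two_mul_sum_image A (fun v hv => (hpickA v hv).2) fun v hv => hw' _ (hpickA v hv).1
  have hnonneg : 0 ≤ ∑ e ∈ A.image pick, w e := sum_nonneg fun e he => by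
    obtain ⟨v, hv, rfl⟩ := mem_image.1 he
    exact hw' _ (hpickA v hv).1
  -- this also covers `α = 0`, where the left-hand side is `x / 0 = 0`
  refine div_le_of_le_mul₀ (by positivity) hnonneg ?_
  calc ∑ e ∈ G.edgeFinset, w e ≤ α * (2 * ∑ e ∈ A.image pick, w e) :=
        hforests.trans (mul_le_mul_of_nonneg_left hpicked (by positivity))
    _ = (∑ e ∈ A.image pick, w e) * (2 * α) := by ring

/-- Let `G = (V,E)` be a graph whose edge set is partitioned into `α`
edge-disjoint forests (arboricity at most `α`), with a positive weight `w(e)` on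
each edge.  Suppose each vertex `u` (with at least one incident edge) picks an
incident edge of maximum weight among its incident edges.  Then the total weight
of the set of picked edges is at least `w(E)/(2α)`. -/
theorem stmt5 {V : Type*} [Fintype V] [DecidableEq V]
    (G : SimpleGraph V) [DecidableRel G.Adj]
    (α : ℕ) (hα : 1 ≤ α)
    (F : Fin α → SimpleGraph V)
    (hforest : ∀ i, (F i).IsAcyclic)
    (hsub : ∀ i, F i ≤ G)
    (hpart : ∀ e ∈ G.edgeSet, ∃! i, e ∈ (F i).edgeSet)
    (w : Sym2 V → ℝ)
    (hw : ∀ e ∈ G.edgeFinset, 0 < w e)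
    (pick : V → Sym2 V)
    (hpick : ∀ v, 0 < G.degree v →
      pick v ∈ G.incidenceFinset v ∧ ∀ e ∈ G.incidenceFinset v, w e ≤ w (pick v)) :
    (∑ e ∈ G.edgeFinset, w e) / (2 * α) ≤
      ∑ e ∈ (Finset.univ.filter fun v => 0 < G.degree v).image pick, w e :=
  stmt5_general G α F hforest hpart w hw pick hpick
end

section
/- In a rooted forest where every vertex is properly 3-colored with colors {1,2,3}, suppose edges are marked by the following rule: each vertex u colored 1 marks either all its child-edges from children colored 2 or 3, or its parent-edge if the parent is colored 2 or 3 (one of the two options); each vertex u colored 2 marks either all its child-edges from children colored 3, or its parent-edge if the parent is colored 3. Then every directed path (toward the root) consisting of marked edges has length at most 4. -/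
def stmt6E (cu cv : ℕ) (bu bv : Bool) : Prop :=
  (cv = 1 ∧ bv = true ∧ (cu = 2 ∨ cu = 3)) ∨
  (cu = 1 ∧ bu = false ∧ (cv = 2 ∨ cv = 3)) ∨
  (cv = 2 ∧ bv = true ∧ cu = 3) ∨
  (cu = 2 ∧ bu = false ∧ cv = 3)

lemma stmt6aux1 {c0 c1 c2 : ℕ} {b0 b1 b2 : Bool} (h01 : stmt6E c0 c1 b0 b1)
    (h12 : stmt6E c1 c2 b1 b2) (d0 : c0 ≠ c1) (d1 : c1 ≠ c2) : c1 ≠ 1 := by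
  intro hc
  rcases h01 with ⟨-, hb, -⟩ | ⟨h, -, -⟩ | ⟨h, -, -⟩ | ⟨-, -, h⟩
  · rcases h12 with ⟨h, -, -⟩ | ⟨-, hb', -⟩ | ⟨-, -, h⟩ | ⟨h, -, -⟩
    · omega
    · simp [hb] at hb'
    · omega
    · omega
  · omega
  · omega
  · omega

lemma stmt6aux32 {cu cv : ℕ} {bu bv : Bool} (h : stmt6E cu cv bu bv)
    (h3 : cu = 3) (h2 : cv = 2) : bv = true := by
  rcases h with ⟨h, -, -⟩ | ⟨h, -, -⟩ | ⟨-, hb, -⟩ | ⟨h, -, -⟩ <;> first | omega | exact hb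

lemma stmt6aux23 {cu cv : ℕ} {bu bv : Bool} (h : stmt6E cu cv bu bv)
    (h2 : cu = 2) (h3 : cv = 3) : bu = false := by
  rcases h with ⟨h, -, -⟩ | ⟨h, -, -⟩ | ⟨h, -, -⟩ | ⟨-, hb, -⟩ <;> first | omega | exact hb

/-- In a rooted forest (edges oriented from child to parent, given by a partial
parent function) whose vertices are properly 3-colored with colors `{1,2,3}`,
suppose edges are marked as follows: each vertex `u` colored `1` either marks all
its child-edges coming from children colored `2` or `3` (choice `true`), or marks
its parent-edge when the parent is colored `2` or `3` (choice `false`); each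
vertex `u` colored `2` either marks all its child-edges coming from children
colored `3`, or marks its parent-edge when the parent is colored `3`.  Then every
directed path (toward the root) of marked edges has length at most `4`: there is
no directed path `v₀ → v₁ → ... → v₅` of five marked edges. -/
theorem stmt6 {V : Type*}
    (parent : V → Option V)
    (color : V → ℕ)
    (hcol : ∀ v, color v = 1 ∨ color v = 2 ∨ color v = 3)
    (hproper : ∀ u v, parent u = some v → color u ≠ color v)
    (choice : V → Bool)
    (marked : V → V → Prop)
    (hmark : ∀ u v, marked u v → parent u = some v ∧
      ((color v = 1 ∧ choice v = true ∧ (color u = 2 ∨ color u = 3)) ∨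
       (color u = 1 ∧ choice u = false ∧ (color v = 2 ∨ color v = 3)) ∨
       (color v = 2 ∧ choice v = true ∧ color u = 3) ∨
       (color u = 2 ∧ choice u = false ∧ color v = 3))) :
    ¬ ∃ p : Fin 6 → V, ∀ i : Fin 5, marked (p i.castSucc) (p i.succ) := by

  rintro ⟨p, hp⟩
  have h : ∀ i : Fin 5, parent (p i.castSucc) = some (p i.succ) ∧
      stmt6E (color (p i.castSucc)) (color (p i.succ))
        (choice (p i.castSucc)) (choice (p i.succ)) := fun i => hmark _ _ (hp i)
  have e0 : stmt6E (color (p 0)) (color (p 1)) (choice (p 0)) (choice (p 1)) := (h 0).2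
  have e1 : stmt6E (color (p 1)) (color (p 2)) (choice (p 1)) (choice (p 2)) := (h 1).2
  have e2 : stmt6E (color (p 2)) (color (p 3)) (choice (p 2)) (choice (p 3)) := (h 2).2
  have e3 : stmt6E (color (p 3)) (color (p 4)) (choice (p 3)) (choice (p 4)) := (h 3).2
  have e4 : stmt6E (color (p 4)) (color (p 5)) (choice (p 4)) (choice (p 5)) := (h 4).2
  have d0 : color (p 0) ≠ color (p 1) := hproper _ _ (h 0).1
  have d1 : color (p 1) ≠ color (p 2) := hproper _ _ (h 1).1
  have d2 : color (p 2) ≠ color (p 3) := hproper _ _ (h 2).1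
  have d3 : color (p 3) ≠ color (p 4) := hproper _ _ (h 3).1
  have d4 : color (p 4) ≠ color (p 5) := hproper _ _ (h 4).1
  have n1 := stmt6aux1 e0 e1 d0 d1
  have n2 := stmt6aux1 e1 e2 d1 d2
  have n3 := stmt6aux1 e2 e3 d2 d3
  have n4 := stmt6aux1 e3 e4 d3 d4
  rcases hcol (p 2) with h2 | h2 | h2
  · exact n2 h2
  · have h1 : color (p 1) = 3 := by rcases hcol (p 1) with h | h | h <;> omega
    have h3 : color (p 3) = 3 := by rcases hcol (p 3) with h | h | h <;> omega
    have t := stmt6aux32 e1 h1 h2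
    have f := stmt6aux23 e2 h2 h3
    simp [t] at f
  · have h3 : color (p 3) = 2 := by rcases hcol (p 3) with h | h | h <;> omega
    have h4 : color (p 4) = 3 := by rcases hcol (p 4) with h | h | h <;> omega
    have t := stmt6aux32 e2 h2 h3
    have f := stmt6aux23 e3 h3 h4
    simp [t] at f
end

section
/- Let G = (V,E) be a graph, and let V be partitioned into clusters with at most ε|E| inter-cluster edges. Modify the partition by making singleton clusters out of every vertex u (in a non-singleton cluster S) for which the number of edges from u into S is at most deg(u)/(34α), where α ≥ 1. Then the resulting partition has at most ε(1 + 1/(16α))|E| inter-cluster edges. -/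
open Finset

theorem Finset.card_filter_product {α β : Type*} (s : Finset α) (t : Finset β)
    (P : α × β → Prop) [DecidablePred P] :
    #((s ×ˢ t).filter P) = ∑ a ∈ s, #(t.filter fun b => P (a, b)) := by
  simp only [card_filter, sum_product]

namespace SimpleGraph

variable {V κ : Type*} [Fintype V] [DecidableEq κ]
  (G : SimpleGraph V) [DecidableRel G.Adj]

def crossingPairs (f : V → κ) : Finset (V × V) :=
  (univ ×ˢ univ).filter fun p => G.Adj p.1 p.2 ∧ f p.1 ≠ f p.2

def innerNeighborFinset (f : V → κ) (u : V) : Finset V :=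
  (G.neighborFinset u).filter fun v => f v = f u

def outerNeighborFinset (f : V → κ) (u : V) : Finset V :=
  (G.neighborFinset u).filter fun v => f v ≠ f u

lemma card_inner_add_card_outerNeighborFinset (f : V → κ) (u : V) :
    #(G.innerNeighborFinset f u) + #(G.outerNeighborFinset f u) = G.degree u := by
  rw [innerNeighborFinset, outerNeighborFinset, card_filter_add_card_filter_not,
    card_neighborFinset_eq_degree]

lemma card_crossingPairs (f : V → κ) :
    #(G.crossingPairs f) = ∑ u, #(G.outerNeighborFinset f u) := by
  simp only [crossingPairs, card_filter_product, outerNeighborFinset, neighborFinset_eq_filter,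
    filter_filter, ne_comm]

lemma card_crossingPairs_le_of_eq_off [DecidableEq V] {κ' : Type*} [DecidableEq κ']
    {f : V → κ} {g : V → κ'} {B : Finset V} (h : ∀ u v, u ∉ B → v ∉ B → f u = f v → g u = g v) :
    #(G.crossingPairs g) ≤ #(G.crossingPairs f) + 2 * ∑ u ∈ B, #(G.innerNeighborFinset f u) := by
  set A := (B ×ˢ univ).filter fun p => G.Adj p.1 p.2 ∧ f p.2 = f p.1
  have hA : #A = ∑ u ∈ B, #(G.innerNeighborFinset f u) := by
    simp only [A, card_filter_product, innerNeighborFinset, neighborFinset_eq_filter,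
      filter_filter]
  have hsub : G.crossingPairs g ⊆ G.crossingPairs f ∪ A ∪ A.image Prod.swap := by
    rintro ⟨u, v⟩ huv
    simp only [crossingPairs, A, mem_union, mem_filter, mem_product, mem_univ, true_and, and_true,
      mem_image, Prod.exists, Prod.swap_prod_mk, Prod.mk.injEq] at huv ⊢
    by_cases hf : f u = f v
    · by_cases hu : u ∈ B
      · exact Or.inl (Or.inr ⟨hu, huv.1, hf.symm⟩)
      · by_cases hv : v ∈ B
        · exact Or.inr ⟨v, u, ⟨hv, huv.1.symm, hf⟩, rfl, rfl⟩
        · exact absurd (h u v hu hv hf) huv.2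
    · exact Or.inl (Or.inl ⟨huv.1, hf⟩)
  calc #(G.crossingPairs g) ≤ #(G.crossingPairs f ∪ A ∪ A.image Prod.swap) := card_le_card hsub
    _ ≤ #(G.crossingPairs f) + #A + #A := by
      grw [card_union_le, card_union_le, card_image_le]
    _ = _ := by rw [hA]; ring

lemma sub_one_mul_sum_card_innerNeighborFinset_le {f : V → κ} {B : Finset V} {t : ℝ}
    (h : ∀ u ∈ B, t * #(G.innerNeighborFinset f u) ≤ G.degree u) :
    (t - 1) * ∑ u ∈ B, (#(G.innerNeighborFinset f u) : ℝ) ≤ #(G.crossingPairs f) := by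
  have hout : ∑ u ∈ B, #(G.outerNeighborFinset f u) ≤ #(G.crossingPairs f) := by
    rw [card_crossingPairs]
    exact sum_le_sum_of_subset (subset_univ B)
  have hdeg (u : V) : (G.degree u : ℝ) - #(G.innerNeighborFinset f u) =
      #(G.outerNeighborFinset f u) := by
    rw [← card_inner_add_card_outerNeighborFinset G f u]; push_cast; ring
  calc (t - 1) * ∑ u ∈ B, (#(G.innerNeighborFinset f u) : ℝ)
      = ∑ u ∈ B, (t * #(G.innerNeighborFinset f u) - #(G.innerNeighborFinset f u)) := by
        rw [sub_one_mul, mul_sum, sum_sub_distrib]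
    _ ≤ ∑ u ∈ B, ((G.degree u : ℝ) - #(G.innerNeighborFinset f u)) :=
        sum_le_sum fun u hu => by linarith [h u hu]
    _ = ∑ u ∈ B, (#(G.outerNeighborFinset f u) : ℝ) := by simp only [hdeg]
    _ ≤ #(G.crossingPairs f) := by exact_mod_cast hout

end SimpleGraph

lemma eB_singleton_filter_eq {V κ : Type*} [Fintype V] [DecidableEq V] [DecidableEq κ]
    (G : SimpleGraph V) [DecidableRel G.Adj] (f : V → κ) (u : V) :
    eB G {u} (univ.filter fun v => f v = f u) = #(G.innerNeighborFinset f u) := by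
  rw [eB, card_filter_product, sum_singleton, SimpleGraph.innerNeighborFinset,
    SimpleGraph.neighborFinset_eq_filter, filter_filter, filter_filter]
  simp only [and_comm]

theorem stmt8_general {V ι : Type*} [Fintype V] [DecidableEq V] [DecidableEq ι]
    (G : SimpleGraph V) [DecidableRel G.Adj]
    (α ε : ℝ) (hα : 1 ≤ α)
    (c : V → ι) (c' : V → ι ⊕ V)
    (Bad : V → Prop)
    (hBad : ∀ u, Bad u ↔
      (1 < (Finset.univ.filter fun v => c v = c u).card ∧
        (eB G {u} (Finset.univ.filter fun v => c v = c u) : ℝ) ≤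
          (G.degree u : ℝ) / (34 * α)))
    (hc' : ∀ v, (Bad v → c' v = Sum.inr v) ∧ (¬ Bad v → c' v = Sum.inl (c v)))
    (hm : (((Finset.univ ×ˢ Finset.univ).filter fun p : V × V =>
        G.Adj p.1 p.2 ∧ c p.1 ≠ c p.2).card : ℝ) ≤ ε * (2 * G.edgeFinset.card)) :
    (((Finset.univ ×ˢ Finset.univ).filter fun p : V × V =>
        G.Adj p.1 p.2 ∧ c' p.1 ≠ c' p.2).card : ℝ)
      ≤ ε * (1 + 1 / (16 * α)) * (2 * G.edgeFinset.card) := by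
  classical
  set B := univ.filter Bad
  have hα0 : 0 < 34 * α := by linarith
  have hrefine (u v : V) (hu : u ∉ B) (hv : v ∉ B) (huv : c u = c v) : c' u = c' v := by
    simp only [B, mem_filter, mem_univ, true_and] at hu hv
    rw [(hc' u).2 hu, (hc' v).2 hv, huv]
  have hinner : ∀ u ∈ B, 34 * α * #(G.innerNeighborFinset c u) ≤ G.degree u := by
    intro u hu
    have := ((hBad u).1 (by simpa [B] using hu)).2
    rwa [eB_singleton_filter_eq, le_div_iff₀ hα0, mul_comm] at this
  have hcharge := G.sub_one_mul_sum_card_innerNeighborFinset_le hinner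
  have hsplit : (#(G.crossingPairs c') : ℝ) ≤
      #(G.crossingPairs c) + 2 * ∑ u ∈ B, (#(G.innerNeighborFinset c u) : ℝ) := by
    exact_mod_cast G.card_crossingPairs_le_of_eq_off hrefine
  have hS : 0 ≤ ∑ u ∈ B, (#(G.innerNeighborFinset c u) : ℝ) :=
    sum_nonneg fun _ _ => Nat.cast_nonneg _
  change (#(G.crossingPairs c) : ℝ) ≤ _ at hm
  change (#(G.crossingPairs c') : ℝ) ≤ _
  generalize ∑ u ∈ B, (#(G.innerNeighborFinset c u) : ℝ) = S at hcharge hsplit hS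
  generalize (#(G.crossingPairs c) : ℝ) = M at hcharge hsplit hm
  have h2S : 2 * S ≤ M * (1 / (16 * α)) := by
    rw [mul_one_div, le_div_iff₀ (by linarith)]; nlinarith
  calc (#(G.crossingPairs c') : ℝ) ≤ M + 2 * S := hsplit
    _ ≤ M * (1 + 1 / (16 * α)) := by linarith
    _ ≤ ε * (2 * #G.edgeFinset) * (1 + 1 / (16 * α)) :=
        mul_le_mul_of_nonneg_right hm (by positivity)
    _ = _ := by ring

/-- Let `G = (V,E)` be a graph with a clustering `c : V → ι` having at most `ε|E|`
inter-cluster edges (counted here as ordered pairs: at most `ε · 2|E|`).  Modify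
the partition by making a singleton cluster out of every vertex `u` lying in a
non-singleton cluster `S` with `|E({u},S)| ≤ deg(u)/(34α)`, where `α ≥ 1` (the
new clustering `c'` sends such "bad" vertices to themselves and all other
vertices to their old cluster).  Then the resulting partition has at most
`ε(1 + 1/(16α))|E|` inter-cluster edges. -/
theorem stmt8 {V ι : Type*} [Fintype V] [DecidableEq V] [DecidableEq ι]
    (G : SimpleGraph V) [DecidableRel G.Adj]
    (α ε : ℝ) (hα : 1 ≤ α) (hε : 0 ≤ ε)
    (c : V → ι) (c' : V → ι ⊕ V)
    (Bad : V → Prop)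
    (hBad : ∀ u, Bad u ↔
      (1 < (Finset.univ.filter fun v => c v = c u).card ∧
        (eB G {u} (Finset.univ.filter fun v => c v = c u) : ℝ) ≤
          (G.degree u : ℝ) / (34 * α)))
    (hc' : ∀ v, (Bad v → c' v = Sum.inr v) ∧ (¬ Bad v → c' v = Sum.inl (c v)))
    (hm : (((Finset.univ ×ˢ Finset.univ).filter fun p : V × V =>
        G.Adj p.1 p.2 ∧ c p.1 ≠ c p.2).card : ℝ) ≤ ε * (2 * G.edgeFinset.card)) :
    (((Finset.univ ×ˢ Finset.univ).filter fun p : V × V =>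
        G.Adj p.1 p.2 ∧ c' p.1 ≠ c' p.2).card : ℝ)
      ≤ ε * (1 + 1 / (16 * α)) * (2 * G.edgeFinset.card) :=
  stmt8_general G α ε hα c c' Bad hBad hc' hm
end

section
/- Let X = x₁ + ... + x_s where x₁, ..., x_s are k-wise independent {0,1}-valued random variables, let μ = E[X], and suppose δ ≥ 1 and k ≥ ⌈μδ⌉. Then Pr[X ≥ (1+δ)μ] ≤ e^{−μδ/3}. -/
/-!
Write `X = ∑ xᵢ`, `pᵢ = E[xᵢ]`, `r = ⌈μδ⌉` and `N = ⌈(1+δ)μ⌉`. The binomial moment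
`C(X, r) = ∑_{|T| = r} ∏_{i ∈ T} xᵢ` only involves products of `r ≤ k` of the variables, so its
expectation is the elementary symmetric function `e_r(p)`, and `r! e_r(p) ≤ (∑ pᵢ)^r = μ^r`.
On the event `X ≥ (1+δ)μ` we have `C(X, r) ≥ C(N, r)`, so Markov's inequality gives
`Pr ≤ μ^r / ∏_{j<r} (N - j)`. Finally `N - j ≥ μ (1 + uⱼ)` with `uⱼ = (μδ - j)/(μδ) ∈ [0, 1]`,
`1 + u ≥ e^{2u/3}` on `[0, 1]`, and `∑_{j<r} uⱼ ≥ μδ/2`, whence `∏_{j<r} (N - j) ≥ μ^r e^{μδ/3}`.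
-/

open MeasureTheory ProbabilityTheory Finset
open scoped Nat

theorem sum_powersetCard_succ_insert_prod {R ι : Type*} [CommSemiring R] [DecidableEq ι]
    (p : ι → R) {a : ι} {s : Finset ι} (ha : a ∉ s) (n : ℕ) :
    ∑ t ∈ (insert a s).powersetCard (n + 1), ∏ i ∈ t, p i =
      ∑ t ∈ s.powersetCard (n + 1), ∏ i ∈ t, p i + p a * ∑ t ∈ s.powersetCard n, ∏ i ∈ t, p i := by
  have ha' : ∀ t ∈ s.powersetCard n, a ∉ t := fun t ht h => ha ((mem_powersetCard.1 ht).1 h)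
  rw [powersetCard_succ_insert ha, sum_union, sum_image, mul_sum]
  · exact congrArg _ (sum_congr rfl fun t ht => prod_insert (ha' t ht))
  · intro t ht t' ht' h
    rw [← erase_insert (ha' t ht), ← erase_insert (ha' t' ht'), h]
  · exact disjoint_right.2 fun t ht ht' => by
      obtain ⟨t', ht', rfl⟩ := mem_image.1 ht
      exact ha ((mem_powersetCard.1 ht').1 (mem_insert_self a t'))

theorem factorial_mul_sum_powersetCard_prod_le_pow_sum {R ι : Type*} [CommSemiring R]
    [LinearOrder R] [IsOrderedRing R] [ExistsAddOfLE R] {p : ι → R} (s : Finset ι)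
    (hp : ∀ i ∈ s, 0 ≤ p i) (r : ℕ) :
    r ! * ∑ t ∈ s.powersetCard r, ∏ i ∈ t, p i ≤ (∑ i ∈ s, p i) ^ r := by
  classical
  induction s using Finset.induction generalizing r with
  | empty =>
    cases r with
    | zero => simp
    | succ n => simp [powersetCard_eq_empty.2 (by simp : #(∅ : Finset ι) < n + 1)]
  | @insert a s ha ih =>
    cases r with
    | zero => simp
    | succ n =>
      have hpa : 0 ≤ p a := hp a (mem_insert_self a s)
      have hp' : ∀ i ∈ s, 0 ≤ p i := fun i hi => hp i (mem_insert_of_mem hi)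
      have hS : 0 ≤ ∑ i ∈ s, p i := sum_nonneg hp'
      rw [sum_powersetCard_succ_insert_prod p ha, sum_insert ha, add_comm (p a)]
      calc ((n + 1) ! : R) * (∑ t ∈ s.powersetCard (n + 1), ∏ i ∈ t, p i +
              p a * ∑ t ∈ s.powersetCard n, ∏ i ∈ t, p i)
          = (n + 1) ! * ∑ t ∈ s.powersetCard (n + 1), ∏ i ∈ t, p i +
              (n + 1) * p a * (n ! * ∑ t ∈ s.powersetCard n, ∏ i ∈ t, p i) := by
            push_cast [Nat.factorial_succ]; ring
        _ ≤ (∑ i ∈ s, p i) ^ (n + 1) + (n + 1) * p a * (∑ i ∈ s, p i) ^ n := by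
            gcongr ?_ + _ * ?_ <;>
              first | exact ih hp' _ | exact mul_nonneg (add_nonneg n.cast_nonneg zero_le_one) hpa
        _ ≤ (∑ i ∈ s, p i + p a) ^ (n + 1) := by
            simpa [mul_comm, mul_left_comm, mul_assoc] using
              pow_add_mul_le_add_pow hS (add_nonneg (mul_nonneg zero_le_two hS) hpa) (n + 1)

section ZeroOne

variable {R ι : Type*} [CommSemiring R] [DecidableEq R] {f : ι → R} {s : Finset ι}

theorem eq_ite_of_zero_or_one (hf : ∀ i ∈ s, f i = 0 ∨ f i = 1) :
    ∀ i ∈ s, f i = if f i = 1 then 1 else 0 := by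
  intro i hi
  rcases hf i hi with h | h <;> simp [h]

theorem sum_eq_card_filter_of_zero_or_one (hf : ∀ i ∈ s, f i = 0 ∨ f i = 1) :
    ∑ i ∈ s, f i = #{i ∈ s | f i = 1} := by
  rw [sum_congr rfl (eq_ite_of_zero_or_one hf), sum_boole]

theorem sum_powersetCard_prod_of_zero_or_one (hf : ∀ i ∈ s, f i = 0 ∨ f i = 1) (r : ℕ) :
    ∑ t ∈ s.powersetCard r, ∏ i ∈ t, f i = (#{i ∈ s | f i = 1}).choose r := by
  have hprod : ∀ t ∈ s.powersetCard r, ∏ i ∈ t, f i = if ∀ i ∈ t, f i = 1 then 1 else 0 :=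
    fun t ht => by
      rw [prod_congr rfl fun i hi =>
        eq_ite_of_zero_or_one hf i ((mem_powersetCard.1 ht).1 hi), prod_boole]
  rw [sum_congr rfl hprod, sum_boole, ← card_powersetCard]
  congr 2
  ext t
  simp only [mem_filter, mem_powersetCard, subset_iff]
  grind

end ZeroOne

theorem choose_ceil_le_sum_powersetCard_prod {ι : Type*} {f : ι → ℝ} {s : Finset ι}
    (hf : ∀ i ∈ s, f i = 0 ∨ f i = 1) {t : ℝ} (ht : t ≤ ∑ i ∈ s, f i) (r : ℕ) :
    (⌈t⌉₊.choose r : ℝ) ≤ ∑ u ∈ s.powersetCard r, ∏ i ∈ u, f i := by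
  rw [sum_powersetCard_prod_of_zero_or_one hf]
  rw [sum_eq_card_filter_of_zero_or_one hf] at ht
  exact_mod_cast Nat.choose_le_choose r (Nat.ceil_le.2 ht)

theorem Nat.cast_descFactorial_eq_prod_range_sub {R : Type*} [CommRing R] {n k : ℕ} (h : k ≤ n) :
    (n.descFactorial k : R) = ∏ i ∈ range k, ((n : R) - i) := by
  rw [Nat.descFactorial_eq_prod_range, Nat.cast_prod]
  exact prod_congr rfl fun i hi => Nat.cast_sub ((mem_range.1 hi).le.trans h)

theorem integral_finset_prod_of_iIndepFun {Ω ι : Type*} [MeasurableSpace Ω] {μ : Measure Ω}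
    {x : ι → Ω → ℝ} {t : Finset ι} (hx : ∀ i ∈ t, AEStronglyMeasurable (x i) μ)
    (hind : iIndepFun (fun i : t => x i) μ) :
    ∫ ω, ∏ i ∈ t, x i ω ∂μ = ∏ i ∈ t, ∫ ω, x i ω ∂μ := by
  simp_rw [← prod_coe_sort t]
  exact hind.integral_fun_prod_eq_prod_integral fun i => hx i i.2

section LimitedIndependence

variable {Ω ι : Type*} [MeasurableSpace Ω] {μ : Measure Ω} {x : ι → Ω → ℝ}

theorem integrable_finset_prod_of_zero_or_one [IsFiniteMeasure μ]
    (hmeas : ∀ i, Measurable (x i)) (h01 : ∀ i ω, x i ω = 0 ∨ x i ω = 1) (t : Finset ι) :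
    Integrable (fun ω => ∏ i ∈ t, x i ω) μ := by
  refine .of_bound (Finset.measurable_prod t fun i _ => hmeas i).aestronglyMeasurable 1
    (ae_of_all _ fun ω => ?_)
  rw [norm_prod]
  exact prod_le_one (fun _ _ => norm_nonneg _) fun i _ => by rcases h01 i ω with h | h <;> simp [h]

theorem integral_sum_powersetCard_prod_of_iIndepFun [IsFiniteMeasure μ] (s : Finset ι)
    (hmeas : ∀ i, Measurable (x i)) (h01 : ∀ i ω, x i ω = 0 ∨ x i ω = 1) {r : ℕ}
    (hind : ∀ t : Finset ι, #t = r → iIndepFun (fun i : t => x i) μ) :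
    ∫ ω, ∑ t ∈ s.powersetCard r, ∏ i ∈ t, x i ω ∂μ =
      ∑ t ∈ s.powersetCard r, ∏ i ∈ t, ∫ ω, x i ω ∂μ := by
  rw [integral_finsetSum _ fun t _ => integrable_finset_prod_of_zero_or_one hmeas h01 t]
  exact sum_congr rfl fun t ht => integral_finset_prod_of_iIndepFun
    (fun i _ => (hmeas i).aestronglyMeasurable) (hind t (mem_powersetCard.1 ht).2)

theorem measureReal_le_sum_mul_descFactorial_ceil_le_integral_pow [IsFiniteMeasure μ]
    (s : Finset ι) (hmeas : ∀ i, Measurable (x i)) (h01 : ∀ i ω, x i ω = 0 ∨ x i ω = 1) {r : ℕ}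
    (hind : ∀ t : Finset ι, #t = r → iIndepFun (fun i : t => x i) μ) (a : ℝ) :
    μ.real {ω | a ≤ ∑ i ∈ s, x i ω} * ⌈a⌉₊.descFactorial r ≤ (∫ ω, ∑ i ∈ s, x i ω ∂μ) ^ r := by
  set S : Ω → ℝ := fun ω => ∑ t ∈ s.powersetCard r, ∏ i ∈ t, x i ω
  have hS_nonneg : 0 ≤ᵐ[μ] S := ae_of_all _ fun ω =>
    sum_nonneg fun t _ => prod_nonneg fun i _ => by rcases h01 i ω with h | h <;> simp [h]
  have hS_int : Integrable S μ :=
    integrable_finsetSum _ fun t _ => integrable_finset_prod_of_zero_or_one hmeas h01 t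
  have hmarkov : μ.real {ω | a ≤ ∑ i ∈ s, x i ω} * ⌈a⌉₊.choose r ≤ ∫ ω, S ω ∂μ := by
    refine le_trans ?_ (mul_meas_ge_le_integral_of_nonneg hS_nonneg hS_int (⌈a⌉₊.choose r))
    rw [mul_comm]
    exact mul_le_mul_of_nonneg_left (measureReal_mono fun ω hω =>
      choose_ceil_le_sum_powersetCard_prod (fun i _ => h01 i ω) hω r) (Nat.cast_nonneg _)
  have hmean : ∫ ω, ∑ i ∈ s, x i ω ∂μ = ∑ i ∈ s, ∫ ω, x i ω ∂μ :=
    integral_finsetSum _ fun i _ => by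
      simpa using integrable_finset_prod_of_zero_or_one (μ := μ) hmeas h01 {i}
  calc μ.real {ω | a ≤ ∑ i ∈ s, x i ω} * ⌈a⌉₊.descFactorial r
      = r ! * (μ.real {ω | a ≤ ∑ i ∈ s, x i ω} * ⌈a⌉₊.choose r) := by
        rw [Nat.descFactorial_eq_factorial_mul_choose]; push_cast; ring
    _ ≤ r ! * ∑ t ∈ s.powersetCard r, ∏ i ∈ t, ∫ ω, x i ω ∂μ := by
        rw [← integral_sum_powersetCard_prod_of_iIndepFun s hmeas h01 hind]; gcongr
    _ ≤ (∫ ω, ∑ i ∈ s, x i ω ∂μ) ^ r := by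
        rw [hmean]
        exact factorial_mul_sum_powersetCard_prod_le_pow_sum _
          (fun i _ => integral_nonneg fun ω => by rcases h01 i ω with h | h <;> simp [h]) r

end LimitedIndependence

/-- Chord bound for `exp` on `[0, 2/3]`, using `exp (2/3) ≤ 2`. -/
theorem Real.exp_two_thirds_mul_le_one_add {u : ℝ} (h0 : 0 ≤ u) (h1 : u ≤ 1) :
    Real.exp (2 / 3 * u) ≤ 1 + u := by
  have hexp : Real.exp (2 / 3) ≤ 2 := by
    rw [← Real.le_log_iff_exp_le two_pos]
    linarith [Real.log_two_gt_d9]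
  have hconv := convexOn_exp.2 (Set.mem_univ 0) (Set.mem_univ (2 / 3)) (sub_nonneg.2 h1) h0
    (sub_add_cancel 1 u)
  simp only [smul_eq_mul, mul_zero, zero_add, Real.exp_zero, mul_one] at hconv
  rw [mul_comm]
  nlinarith [mul_le_mul_of_nonneg_left hexp h0]

theorem sq_div_two_le_sum_range_sub {q : ℝ} {r : ℕ} (hq : 0 ≤ q) (hqr : q ≤ r)
    (hrq : r ≤ q + 1) : q ^ 2 / 2 ≤ ∑ j ∈ range r, (q - j) := by
  have hgauss : ∀ n : ℕ, (∑ j ∈ range n, (j : ℝ)) * 2 = n * (n - 1) := by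
    intro n
    induction n with
    | zero => simp
    | succ n ih => rw [sum_range_succ, add_mul, ih]; push_cast; ring
  rw [sum_sub_distrib, sum_const, card_range, nsmul_eq_mul]
  nlinarith [hgauss r]

theorem pow_mul_exp_le_prod_range_sub {m δ y : ℝ} {r : ℕ} (hm : 0 < m) (hδ : 1 ≤ δ)
    (hr : m * δ ≤ r) (hr' : r ≤ m * δ + 1) (hy : (1 + δ) * m ≤ y) :
    m ^ r * Real.exp (m * δ / 3) ≤ ∏ j ∈ range r, (y - j) := by
  set q := m * δ
  have hq : 0 < q := mul_pos hm (by linarith)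
  have hmq : m ≤ q := le_mul_of_one_le_right hm.le hδ
  have hfactor : ∀ j ∈ range r, m * Real.exp (2 / 3 * ((q - j) / q)) ≤ y - j := by
    intro j hj
    have hjq : (j : ℝ) ≤ q := by
      have : (j : ℝ) + 1 ≤ r := by exact_mod_cast mem_range.1 hj
      linarith
    have hu0 : 0 ≤ (q - j) / q := div_nonneg (by linarith) hq.le
    have hu1 : (q - j) / q ≤ 1 := (div_le_one hq).2 (by linarith [j.cast_nonneg (α := ℝ)])
    calc m * Real.exp (2 / 3 * ((q - j) / q)) ≤ m * (1 + (q - j) / q) :=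
          mul_le_mul_of_nonneg_left (Real.exp_two_thirds_mul_le_one_add hu0 hu1) hm.le
      _ = m + m / q * (q - j) := by ring
      _ ≤ m + (q - j) := by
          gcongr m + ?_
          exact mul_le_of_le_one_left (by linarith) ((div_le_one hq).2 hmq)
      _ ≤ y - j := by linarith
  have hsum : q / 3 ≤ 2 / 3 * ∑ j ∈ range r, (q - j) / q := by
    rw [← sum_div, mul_div_assoc', le_div_iff₀ hq]
    nlinarith [sq_div_two_le_sum_range_sub hq.le hr hr']
  calc m ^ r * Real.exp (q / 3)
      ≤ m ^ r * Real.exp (2 / 3 * ∑ j ∈ range r, (q - j) / q) := by gcongr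
    _ = ∏ j ∈ range r, m * Real.exp (2 / 3 * ((q - j) / q)) := by
        rw [prod_mul_distrib, prod_const, card_range, mul_sum, Real.exp_sum]
    _ ≤ ∏ j ∈ range r, (y - j) :=
        prod_le_prod (fun j _ => by positivity) hfactor

/-- Schmidt–Siegel–Srinivasan tail bound with limited independence, regime `δ ≥ 1`:
if `X = x₁ + ... + x_s` where the `x_i` are `k`-wise independent `{0,1}`-valued
random variables, `μ = E[X]`, `δ ≥ 1` and `k ≥ ⌈μδ⌉`, then
`Pr[X ≥ (1+δ)μ] ≤ e^{−μδ/3}`. -/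
theorem stmt9 {Ω : Type*} [MeasurableSpace Ω] (μ : Measure Ω) [IsProbabilityMeasure μ]
    (s k : ℕ) (x : Fin s → Ω → ℝ)
    (hmeas : ∀ i, Measurable (x i))
    (h01 : ∀ i ω, x i ω = 0 ∨ x i ω = 1)
    (hkwise : ∀ t : Finset (Fin s), t.card ≤ k →
      iIndepFun (m := fun _ : t => (inferInstance : MeasurableSpace ℝ))
        (fun i : t => x i) μ)
    (δ : ℝ) (hδ : 1 ≤ δ)
    (μX : ℝ) (hμX : μX = ∫ ω, (∑ i, x i ω) ∂μ)
    (hk : ⌈μX * δ⌉₊ ≤ k) :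
    (μ {ω | (1 + δ) * μX ≤ ∑ i, x i ω}).toReal ≤ Real.exp (-(μX * δ) / 3) := by
  rcases le_or_gt μX 0 with hμ0 | hμpos
  · calc (μ _).toReal ≤ 1 := measureReal_le_one
      _ ≤ Real.exp (-(μX * δ) / 3) := Real.one_le_exp (by nlinarith)
  have htail := measureReal_le_sum_mul_descFactorial_ceil_le_integral_pow (μ := μ) univ hmeas
    h01 (fun t ht => hkwise t (ht ▸ hk)) ((1 + δ) * μX)
  have hrN : ⌈μX * δ⌉₊ ≤ ⌈(1 + δ) * μX⌉₊ := Nat.ceil_mono (by nlinarith)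
  rw [Nat.cast_descFactorial_eq_prod_range_sub hrN, ← hμX] at htail
  have hprod := pow_mul_exp_le_prod_range_sub hμpos hδ (Nat.le_ceil _)
    (Nat.ceil_lt_add_one (by positivity)).le (Nat.le_ceil ((1 + δ) * μX))
  rw [neg_div, Real.exp_neg, ← measureReal_def, ← one_div, le_div_iff₀ (Real.exp_pos _)]
  refine le_of_mul_le_mul_left ?_ (pow_pos hμpos ⌈μX * δ⌉₊)
  calc _ = μ.real {ω | (1 + δ) * μX ≤ ∑ i, x i ω} *
        (μX ^ ⌈μX * δ⌉₊ * Real.exp (μX * δ / 3)) := by ring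
    _ ≤ μX ^ ⌈μX * δ⌉₊ * 1 := by grw [hprod, mul_one]; exact htail
end

section
/- Given a partition of the vertex set of a graph G = (V,E) with m inter-cluster edges, suppose a set of vertex-disjoint stars in the cluster graph captures at least m/(8α) inter-cluster edges, and then for some clusters S (leaves of stars) with |E(S, C)| ≤ (ε/(32α))·vol(S) (where C is the star center) the cluster S is removed from its star, where the original number of inter-cluster edges satisfies m ≤ ε|E|. Then after contracting each remaining star into a single cluster, the number of inter-cluster edges is at most ε(1 − 1/(16α))|E|. -/
open Finset

/-- The volume of a vertex set: sum of degrees in `G`. -/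
def vol {V : Type*} [Fintype V] [DecidableEq V] (G : SimpleGraph V) [DecidableRel G.Adj]
    (S : Finset V) : ℕ :=
  ∑ v ∈ S, G.degree v

/-- Let `G = (V,E)` carry a clustering `c : V → ι` with at most `ε|E|`
inter-cluster edges (ordered-pair counts throughout, so at most `ε·2|E|`).
Suppose a set of vertex-disjoint stars in the cluster graph, given by an
idempotent assignment `s₀` of each cluster to its star center, captures at least
a `1/(8α)` fraction of the inter-cluster edges (edges between a leaf cluster and
its center).  Then some leaf clusters `x` with
`|E(x, center)| ≤ (ε/(32α))·vol(x)` are pruned from their stars (yielding the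
final assignment `s`, with unpruned clusters keeping `s x = s₀ x`).  After
contracting each remaining star into a single cluster (new clustering `s ∘ c`),
the number of inter-cluster edges is at most `ε(1 − 1/(16α))|E|`. -/
theorem stmt17 {V ι : Type*} [Fintype V] [DecidableEq V] [DecidableEq ι]
    (G : SimpleGraph V) [DecidableRel G.Adj]
    (α ε : ℝ) (hα : 1 ≤ α) (hε : 0 ≤ ε)
    (c : V → ι) (s₀ s : ι → ι)
    (hs₀ : ∀ x, s₀ (s₀ x) = s₀ x)
    (Pruned : ι → Prop)
    (hkeep : ∀ x, ¬ Pruned x → s x = s₀ x)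
    (hprune : ∀ x, Pruned x → s x = x ∧ s₀ x ≠ x ∧
      (eB G (Finset.univ.filter fun v => c v = x)
          (Finset.univ.filter fun v => c v = s₀ x) : ℝ)
        ≤ ε / (32 * α) * (vol G (Finset.univ.filter fun v => c v = x) : ℝ))
    (hcapture : (((Finset.univ ×ˢ Finset.univ).filter fun p : V × V =>
          G.Adj p.1 p.2 ∧ c p.1 ≠ c p.2).card : ℝ) / (8 * α)
        ≤ (((Finset.univ ×ˢ Finset.univ).filter fun p : V × V =>
          G.Adj p.1 p.2 ∧ c p.1 ≠ c p.2 ∧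
            (s₀ (c p.1) = c p.2 ∨ s₀ (c p.2) = c p.1)).card : ℝ))
    (hm : (((Finset.univ ×ˢ Finset.univ).filter fun p : V × V =>
        G.Adj p.1 p.2 ∧ c p.1 ≠ c p.2).card : ℝ) ≤ ε * (2 * G.edgeFinset.card)) :
    (((Finset.univ ×ˢ Finset.univ).filter fun p : V × V =>
        G.Adj p.1 p.2 ∧ s (c p.1) ≠ s (c p.2)).card : ℝ)
      ≤ ε * (1 - 1 / (16 * α)) * (2 * G.edgeFinset.card) := by
  classical
  set cl : ι → Finset V := fun x => Finset.univ.filter fun v => c v = x with hcl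
  set I : Finset (V × V) := (Finset.univ ×ˢ Finset.univ).filter fun p : V × V =>
      G.Adj p.1 p.2 ∧ c p.1 ≠ c p.2 with hI
  set F : Finset (V × V) := (Finset.univ ×ˢ Finset.univ).filter fun p : V × V =>
      G.Adj p.1 p.2 ∧ s (c p.1) ≠ s (c p.2) with hF
  set Cap : Finset (V × V) := (Finset.univ ×ˢ Finset.univ).filter fun p : V × V =>
      G.Adj p.1 p.2 ∧ c p.1 ≠ c p.2 ∧ (s₀ (c p.1) = c p.2 ∨ s₀ (c p.2) = c p.1) with hCap
  set K : Finset (V × V) := (Finset.univ ×ˢ Finset.univ).filter fun p : V × V =>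
      G.Adj p.1 p.2 ∧ c p.1 ≠ c p.2 ∧ (s₀ (c p.1) = c p.2 ∨ s₀ (c p.2) = c p.1) ∧
        ¬ Pruned (c p.1) ∧ ¬ Pruned (c p.2) with hK
  set L1 : Finset (V × V) := (Finset.univ ×ˢ Finset.univ).filter fun p : V × V =>
      G.Adj p.1 p.2 ∧ Pruned (c p.1) ∧ s₀ (c p.1) = c p.2 with hL1
  set L2 : Finset (V × V) := (Finset.univ ×ˢ Finset.univ).filter fun p : V × V =>
      G.Adj p.1 p.2 ∧ Pruned (c p.2) ∧ s₀ (c p.2) = c p.1 with hL2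
  set X : Finset ι := (Finset.univ.image c).filter Pruned with hX
  -- membership in K implies contracted
  have hKcon : ∀ p : V × V, p ∈ K → s (c p.1) = s (c p.2) := by
    intro p hp
    simp only [hK, Finset.mem_filter] at hp
    obtain ⟨-, -, -, hcap, hp1, hp2⟩ := hp
    rw [hkeep _ hp1, hkeep _ hp2]
    rcases hcap with h | h
    · rw [← h, hs₀, h]
    · rw [← h, hs₀, h]
  -- step 1 : F.card + K.card ≤ I.card
  have step1 : F.card + K.card ≤ I.card := by
    have hFI : F ⊆ I := by
      intro p hp
      simp only [hF, hI, Finset.mem_filter] at hp ⊢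
      exact ⟨hp.1, hp.2.1, fun h => hp.2.2 (by rw [h])⟩
    have hKI : K ⊆ I := by
      intro p hp
      simp only [hK, hI, Finset.mem_filter] at hp ⊢
      exact ⟨hp.1, hp.2.1, hp.2.2.1⟩
    have hdisj : Disjoint F K := by
      rw [Finset.disjoint_left]
      intro p hpF hpK
      simp only [hF, Finset.mem_filter] at hpF
      exact hpF.2.2 (hKcon p hpK)
    calc F.card + K.card = (F ∪ K).card := (Finset.card_union_of_disjoint hdisj).symm
      _ ≤ I.card := Finset.card_le_card (Finset.union_subset hFI hKI)
  -- step 2 : Cap ⊆ K ∪ (L1 ∪ L2)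
  have step2 : Cap.card ≤ K.card + (L1.card + L2.card) := by
    have hsub : Cap ⊆ K ∪ (L1 ∪ L2) := by
      intro p hp
      simp only [hCap, Finset.mem_filter] at hp
      obtain ⟨hmem, hadj, hne, hcap⟩ := hp
      by_cases h1 : Pruned (c p.1)
      · have hco : s₀ (c p.1) = c p.2 := by
          rcases hcap with h | h
          · exact h
          · exfalso
            exact (hprune _ h1).2.1 (by rw [← h, hs₀, h])
        refine Finset.mem_union_right _ (Finset.mem_union_left _ ?_)
        simp only [hL1, Finset.mem_filter]
        exact ⟨hmem, hadj, h1, hco⟩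
      by_cases h2 : Pruned (c p.2)
      · have hco : s₀ (c p.2) = c p.1 := by
          rcases hcap with h | h
          · exfalso
            exact (hprune _ h2).2.1 (by rw [← h, hs₀, h])
          · exact h
        refine Finset.mem_union_right _ (Finset.mem_union_right _ ?_)
        simp only [hL2, Finset.mem_filter]
        exact ⟨hmem, hadj, h2, hco⟩
      · refine Finset.mem_union_left _ ?_
        simp only [hK, Finset.mem_filter]
        exact ⟨hmem, hadj, hne, hcap, h1, h2⟩
    calc Cap.card ≤ (K ∪ (L1 ∪ L2)).card := Finset.card_le_card hsub
      _ ≤ K.card + (L1 ∪ L2).card := Finset.card_union_le _ _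
      _ ≤ K.card + (L1.card + L2.card) := by
          exact Nat.add_le_add_left (Finset.card_union_le _ _) _
  -- step 4 : L2.card ≤ L1.card
  have step4 : L2.card ≤ L1.card := by
    have himg : L2.image Prod.swap ⊆ L1 := by
      intro q hq
      simp only [Finset.mem_image] at hq
      obtain ⟨p, hp, rfl⟩ := hq
      simp only [hL1, hL2, Finset.mem_filter] at hp ⊢
      exact ⟨by simp, hp.2.1.symm, hp.2.2⟩
    calc L2.card = (L2.image Prod.swap).card :=
          (Finset.card_image_of_injective _ Prod.swap_injective).symm
      _ ≤ L1.card := Finset.card_le_card himg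
  -- step 3 : L1.card ≤ ∑ x ∈ X, eB G (cl x) (cl (s₀ x))
  have step3 : L1.card ≤ ∑ x ∈ X, eB G (cl x) (cl (s₀ x)) := by
    have hsub : L1 ⊆ X.biUnion fun x =>
        ((cl x ×ˢ cl (s₀ x)).filter fun p => G.Adj p.1 p.2) := by
      intro p hp
      simp only [hL1, Finset.mem_filter] at hp
      obtain ⟨-, hadj, hpr, hco⟩ := hp
      refine Finset.mem_biUnion.2 ⟨c p.1, ?_, ?_⟩
      · simp only [hX, Finset.mem_filter, Finset.mem_image]
        exact ⟨⟨p.1, Finset.mem_univ _, rfl⟩, hpr⟩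
      · simp only [Finset.mem_filter, Finset.mem_product, hcl]
        exact ⟨⟨by simp, by simp [hco.symm]⟩, hadj⟩
    calc L1.card ≤ _ := Finset.card_le_card hsub
      _ ≤ ∑ x ∈ X, eB G (cl x) (cl (s₀ x)) := Finset.card_biUnion_le
  -- step 6 : ∑ x ∈ X, vol G (cl x) ≤ 2 * edge count
  have step6 : ∑ x ∈ X, vol G (cl x) ≤ 2 * G.edgeFinset.card := by
    have hdisj : (↑X : Set ι).PairwiseDisjoint cl := by
      intro x hx y hy hxy
      simp only [Function.onFun, Finset.disjoint_left, hcl]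
      intro v hv hv'
      simp only [Finset.mem_filter] at hv hv'
      exact hxy (hv.2 ▸ hv'.2 ▸ rfl)
    calc ∑ x ∈ X, vol G (cl x) = ∑ v ∈ X.biUnion cl, G.degree v :=
          (Finset.sum_biUnion hdisj).symm
      _ ≤ ∑ v ∈ Finset.univ, G.degree v := by
          exact Finset.sum_le_sum_of_subset (Finset.subset_univ _)
      _ = 2 * G.edgeFinset.card := by
          rw [← SimpleGraph.sum_degrees_eq_twice_card_edges]
  -- step 5 : real bound on L1
  have hαpos : (0:ℝ) < α := lt_of_lt_of_le one_pos hα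
  have step5 : (L1.card : ℝ) ≤ ε / (32 * α) * (2 * G.edgeFinset.card) := by
    have h1 : (L1.card : ℝ) ≤ ∑ x ∈ X, (eB G (cl x) (cl (s₀ x)) : ℝ) := by
      rw [← Nat.cast_sum]
      exact_mod_cast step3
    have h2 : ∑ x ∈ X, (eB G (cl x) (cl (s₀ x)) : ℝ)
        ≤ ∑ x ∈ X, ε / (32 * α) * (vol G (cl x) : ℝ) := by
      refine Finset.sum_le_sum fun x hx => ?_
      have hpr : Pruned x := (Finset.mem_filter.1 hx).2
      exact (hprune x hpr).2.2
    have h3 : ∑ x ∈ X, ε / (32 * α) * (vol G (cl x) : ℝ)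
        ≤ ε / (32 * α) * (2 * G.edgeFinset.card) := by
      rw [← Finset.mul_sum]
      refine mul_le_mul_of_nonneg_left ?_ (by positivity)
      rw [← Nat.cast_sum]
      exact_mod_cast step6
    linarith
  -- final arithmetic
  have hcast1 : (F.card : ℝ) + K.card ≤ I.card := by exact_mod_cast step1
  have hcast2 : (Cap.card : ℝ) ≤ K.card + (L1.card + L2.card) := by exact_mod_cast step2
  have hcast4 : (L2.card : ℝ) ≤ L1.card := by exact_mod_cast step4
  have hEc : (0:ℝ) ≤ (G.edgeFinset.card : ℝ) := Nat.cast_nonneg _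
  have hIC : (I.card : ℝ) / (8 * α) ≤ (Cap.card : ℝ) := hcapture
  have hIm : (I.card : ℝ) ≤ ε * (2 * G.edgeFinset.card) := hm
  have h8 : (0:ℝ) < 8 * α := by positivity
  have hIC' : (I.card : ℝ) ≤ (Cap.card : ℝ) * (8 * α) := (div_le_iff₀ h8).1 hIC
  have hIpos : (0:ℝ) ≤ (I.card : ℝ) := Nat.cast_nonneg _
  have key : (F.card : ℝ) ≤ (I.card : ℝ) * (1 - 1/(8*α)) + 2 * ((L1.card : ℝ)) := by
    have : (F.card : ℝ) ≤ (I.card : ℝ) - (Cap.card : ℝ) + (L1.card : ℝ) + (L2.card : ℝ) := by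
      linarith
    have h' : (I.card : ℝ) / (8*α) ≤ (Cap.card : ℝ) := hIC
    have : (F.card : ℝ) ≤ (I.card : ℝ) - (I.card : ℝ)/(8*α) + 2*(L1.card : ℝ) := by
      linarith
    have heq : (I.card : ℝ) - (I.card : ℝ)/(8*α) = (I.card : ℝ) * (1 - 1/(8*α)) := by
      field_simp
    linarith [heq ▸ this]
  have hfac : (0:ℝ) ≤ 1 - 1/(8*α) := by
    have : 1/(8*α) ≤ 1/8 := by
      apply div_le_div_of_nonneg_left one_pos.le (by norm_num)
      linarith
    linarith
  have hIfac : (I.card : ℝ) * (1 - 1/(8*α)) ≤ ε * (2 * G.edgeFinset.card) * (1 - 1/(8*α)) :=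
    mul_le_mul_of_nonneg_right hIm hfac
  have hL1' : 2 * (L1.card : ℝ) ≤ 2 * (ε / (32 * α) * (2 * G.edgeFinset.card)) := by
    linarith
  have hfinal : (F.card : ℝ) ≤ ε * (2 * G.edgeFinset.card) * (1 - 1/(8*α))
      + 2 * (ε / (32 * α) * (2 * G.edgeFinset.card)) := by linarith
  have heq2 : ε * (2 * (G.edgeFinset.card:ℝ)) * (1 - 1/(8*α))
      + 2 * (ε / (32 * α) * (2 * G.edgeFinset.card))
      = ε * (1 - 1 / (16 * α)) * (2 * G.edgeFinset.card) := by
    field_simp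
    ring
  calc (F.card : ℝ) ≤ _ := hfinal
    _ = _ := heq2
end

section
/- Let G̃ be obtained from a graph G* by merging groups of vertices (identifying vertices in the same group) and merging parallel edges, where each edge of G̃ is the result of merging at most c edges of G*. Then Φ(G̃) ≥ (1/c)·Φ(G*): the conductance of the merged graph is at least 1/c times the conductance of the original. -/
open Finset

lemma vol_eq_eB {V : Type*} [Fintype V] [DecidableEq V] (G : SimpleGraph V)
    [DecidableRel G.Adj] (S : Finset V) : vol G S = eB G S univ := by
  unfold vol eB
  rw [Finset.card_filter, Finset.sum_product]
  refine Finset.sum_congr rfl fun v _ => ?_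
  rw [← SimpleGraph.card_neighborFinset_eq_degree, SimpleGraph.neighborFinset_eq_filter,
    Finset.card_filter]

/-- Let `G̃` be obtained from a graph `G*` by merging groups of vertices along a
surjection `π` (which never identifies the two endpoints of an edge) and merging
parallel edges, so that `G̃`-adjacency is exactly the image of `G*`-adjacency and
each edge of `G̃` is the result of merging at most `c` edges of `G*`.  If `G*` is
a `φ`-expander then `G̃` is a `(φ/c)`-expander, i.e. `Φ(G̃) ≥ (1/c)·Φ(G*)`
(expander conditions stated multiplicatively:
`φ · min(vol S, vol Sᶜ) ≤ |E(S, Sᶜ)|` for all nonempty proper cuts). -/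
theorem stmt19 {V W : Type*} [Fintype V] [DecidableEq V] [Fintype W] [DecidableEq W]
    (Gs : SimpleGraph V) [DecidableRel Gs.Adj]
    (π : V → W) (hsurj : Function.Surjective π)
    (hnoself : ∀ u v, Gs.Adj u v → π u ≠ π v)
    (Gt : SimpleGraph W) [DecidableRel Gt.Adj]
    (hGt : ∀ x y, Gt.Adj x y ↔ ∃ u v, π u = x ∧ π v = y ∧ Gs.Adj u v)
    (cN : ℕ) (hc1 : 1 ≤ cN)
    (hc : ∀ x y, Gt.Adj x y →
      eB Gs (Finset.univ.filter fun u => π u = x)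
        (Finset.univ.filter fun u => π u = y) ≤ cN)
    (φ : ℝ) (hφ : 0 ≤ φ)
    (hexp : ∀ S : Finset V, S.Nonempty → S ≠ Finset.univ →
      φ * min (vol Gs S : ℝ) (vol Gs Sᶜ : ℝ) ≤ (eB Gs S Sᶜ : ℝ)) :
    ∀ T : Finset W, T.Nonempty → T ≠ Finset.univ →
      (φ / cN) * min (vol Gt T : ℝ) (vol Gt Tᶜ : ℝ) ≤ (eB Gt T Tᶜ : ℝ) := by
  intro T hT hTu
  classical
  set S : Finset V := univ.filter (fun u => π u ∈ T) with hSdef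
  have hScompl : Sᶜ = univ.filter (fun u => π u ∈ Tᶜ) := by
    ext u; simp [hSdef]
  -- volume comparison (generic)
  have hvol : ∀ T' : Finset W,
      vol Gt T' ≤ vol Gs (univ.filter fun u => π u ∈ T') := by
    intro T'
    rw [vol_eq_eB, vol_eq_eB]
    unfold eB
    apply Finset.card_le_card_of_surjOn (fun p : V × V => (π p.1, π p.2))
    intro q hq
    simp only [Finset.coe_filter, Finset.mem_product, Set.mem_setOf_eq, Finset.mem_coe] at hq
    obtain ⟨⟨hq1, -⟩, hadj⟩ := hq
    obtain ⟨u, v, hu, hv, huv⟩ := (hGt q.1 q.2).mp hadj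
    refine ⟨(u, v), ?_, ?_⟩
    · simp only [Finset.coe_filter, Finset.mem_product, Set.mem_setOf_eq, Finset.mem_coe,
        Finset.mem_filter, Finset.mem_univ, true_and]
      exact ⟨⟨hu ▸ hq1, trivial⟩, huv⟩
    · simp [hu, hv]
  -- edge comparison
  have hedge : eB Gs S Sᶜ ≤ cN * eB Gt T Tᶜ := by
    unfold eB
    set P := ((S ×ˢ Sᶜ).filter fun p => Gs.Adj p.1 p.2) with hP
    set f : V × V → W × W := fun p => (π p.1, π p.2) with hf
    have himg : P.image f ⊆ (T ×ˢ Tᶜ).filter fun p => Gt.Adj p.1 p.2 := by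
      intro q hq
      obtain ⟨p, hp, rfl⟩ := Finset.mem_image.mp hq
      simp only [hP, Finset.mem_filter, Finset.mem_product, hSdef, hScompl,
        Finset.mem_filter, Finset.mem_univ, true_and, Finset.mem_compl] at hp
      obtain ⟨⟨h1, h2⟩, hadj⟩ := hp
      refine Finset.mem_filter.mpr ⟨Finset.mem_product.mpr ⟨h1, ?_⟩, ?_⟩
      · simpa using h2
      · exact (hGt _ _).mpr ⟨p.1, p.2, rfl, rfl, hadj⟩
    have hfib : ∀ q ∈ P.image f, (P.filter fun p => f p = q).card ≤ cN := by
      intro q hq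
      have hadj : Gt.Adj q.1 q.2 := (Finset.mem_filter.mp (himg hq)).2
      refine le_trans (Finset.card_le_card ?_) (hc q.1 q.2 hadj)
      intro p hp
      simp only [Finset.mem_filter, hP, Finset.mem_product, hf] at hp
      obtain ⟨⟨-, hadj'⟩, heq⟩ := hp
      have h1 : π p.1 = q.1 := congrArg Prod.fst heq
      have h2 : π p.2 = q.2 := congrArg Prod.snd heq
      exact Finset.mem_filter.mpr ⟨Finset.mem_product.mpr
        ⟨Finset.mem_filter.mpr ⟨Finset.mem_univ _, h1⟩,
         Finset.mem_filter.mpr ⟨Finset.mem_univ _, h2⟩⟩, hadj'⟩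
    calc P.card ≤ cN * (P.image f).card := Finset.card_le_mul_card_image P cN hfib
      _ ≤ cN * ((T ×ˢ Tᶜ).filter fun p => Gt.Adj p.1 p.2).card := by
          exact Nat.mul_le_mul_left cN (Finset.card_le_card himg)
  -- S nonempty and proper
  have hSne : S.Nonempty := by
    obtain ⟨x, hx⟩ := hT
    obtain ⟨u, rfl⟩ := hsurj x
    exact ⟨u, by simp [hSdef, hx]⟩
  have hSu : S ≠ univ := by
    have hy' : ∃ y, y ∉ T := by
      by_contra h; push_neg at h; exact hTu (Finset.eq_univ_iff_forall.mpr h)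
    obtain ⟨y, hy⟩ := hy'
    obtain ⟨u, rfl⟩ := hsurj y
    intro h
    have : u ∈ S := h ▸ Finset.mem_univ u
    simp only [hSdef, Finset.mem_filter] at this
    exact hy this.2
  have hmain := hexp S hSne hSu
  have hcpos : (0 : ℝ) < cN := by exact_mod_cast hc1
  have hminle : min (vol Gt T : ℝ) (vol Gt Tᶜ : ℝ) ≤
      min (vol Gs S : ℝ) (vol Gs Sᶜ : ℝ) := by
    have h1 : (vol Gt T : ℝ) ≤ vol Gs S := by exact_mod_cast hvol T
    have h2 : (vol Gt Tᶜ : ℝ) ≤ vol Gs Sᶜ := by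
      have := hvol Tᶜ
      rw [← hScompl] at this
      exact_mod_cast this
    exact min_le_min h1 h2
  have hedgeR : (eB Gs S Sᶜ : ℝ) ≤ cN * eB Gt T Tᶜ := by exact_mod_cast hedge
  calc (φ / cN) * min (vol Gt T : ℝ) (vol Gt Tᶜ : ℝ)
      ≤ (φ / cN) * min (vol Gs S : ℝ) (vol Gs Sᶜ : ℝ) := by
        apply mul_le_mul_of_nonneg_left hminle (div_nonneg hφ hcpos.le)
    _ = (φ * min (vol Gs S : ℝ) (vol Gs Sᶜ : ℝ)) / cN := by ring
    _ ≤ (eB Gs S Sᶜ : ℝ) / cN := by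
        exact div_le_div_of_nonneg_right hmain hcpos.le
    _ ≤ (cN * eB Gt T Tᶜ : ℝ) / cN := by
        exact div_le_div_of_nonneg_right hedgeR hcpos.le
    _ = (eB Gt T Tᶜ : ℝ) := by field_simp
end
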